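/- Fix d ≥ 2 and the action of SO₀(1,d) on pairs from Θ = {θ ∈ ℝ^{d+1} : θ₀ > √(θ₁²+⋯+θ_d²)} given by (A,(θ,θ′)) ↦ (Aθ, Aθ′). The map (θ,θ′) ↦ ([θ,θ], [θ′,θ′], [θ,θ′]) is a maximal invariant: (i) it is invariant, i.e. ([Aθ,Aθ],[Aθ′,Aθ′],[Aθ,Aθ′]) = ([θ,θ],[θ′,θ′],[θ,θ′]) for all A ∈ SO₀(1,d); and (ii) whenever ([θ₁,θ₁],[θ₂,θ₂],[θ₁,θ₂]) = ([θ₁′,θ₁′],[θ₂′,θ₂′],[θ₁′,θ₂′]) there exists A ∈ SO₀(1,d) with Aθ₁ = θ₁′ and Aθ₂ = θ₂′. -/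

import Mathlib

open MeasureTheory

/-- The Minkowski inner product on ℝ^{d+1}: [x,y] = x₀y₀ − x₁y₁ − ⋯ − x_d y_d. -/
noncomputable def mink {d : ℕ} (x y : Fin (d + 1) → ℝ) : ℝ :=
  x 0 * y 0 - ∑ i : Fin d, x i.succ * y i.succ

/-- The parameter space Θ = {θ : θ₀ > √(θ₁² + ⋯ + θ_d²)}. -/
def hypParam (d : ℕ) : Set (Fin (d + 1) → ℝ) :=
  {θ | Real.sqrt (∑ i : Fin d, θ i.succ ^ 2) < θ 0}

/-- The upper unit hyperboloid sheet L^d. -/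
def hypSheet (d : ℕ) : Set (Fin (d + 1) → ℝ) :=
  {x | mink x x = 1 ∧ 0 < x 0}

/-- SO₀(1,d): determinant-one matrices preserving the Minkowski inner product and
mapping the upper hyperboloid sheet onto itself. -/
def SOplus (d : ℕ) : Set (Matrix (Fin (d + 1)) (Fin (d + 1)) ℝ) :=
  {A | A.det = 1 ∧ (∀ x y, mink (A.mulVec x) (A.mulVec y) = mink x y) ∧
    A.mulVec '' hypSheet d = hypSheet d}

/-- The lift x̃ = (√(1+‖x‖²), x) of a point x ∈ ℝ^d to the hyperboloid. -/
noncomputable def hypLift {d : ℕ} (x : Fin d → ℝ) : Fin (d + 1) → ℝ :=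
  Fin.cons (Real.sqrt (1 + ∑ i, x i ^ 2)) x

/-- The unnormalized density of the hyperboloid distribution. -/
noncomputable def hypKernel {d : ℕ} (θ : Fin (d + 1) → ℝ) (x : Fin d → ℝ) : ℝ :=
  Real.exp (-mink θ (hypLift x)) / Real.sqrt (1 + ∑ i, x i ^ 2)

/-- The normalizing constant of the hyperboloid distribution. -/
noncomputable def hypZ (d : ℕ) (θ : Fin (d + 1) → ℝ) : ℝ :=
  ∫ x : Fin d → ℝ, hypKernel θ x

/-- The density of the hyperboloid distribution P_θ on ℝ^d. -/
noncomputable def hypDensity (d : ℕ) (θ : Fin (d + 1) → ℝ) (x : Fin d → ℝ) : ℝ :=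
  hypKernel θ x / hypZ d θ

/-- The hyperboloid distribution P_θ as a Borel measure on ℝ^d. -/
noncomputable def hypMeasure (d : ℕ) (θ : Fin (d + 1) → ℝ) : Measure (Fin d → ℝ) :=
  volume.withDensity fun x => ENNReal.ofReal (hypDensity d θ x)

/-!
Invariance is built into the definition of `SO₀(1,d)`. For transitivity we use Minkowski
reflections `S_v x = x - 2 [v,x] / [v,v] • v` in spacelike vectors `v`: they preserve `[·,·]`,
preserve the time orientation and have determinant `-1`. By the reverse Cauchy–Schwarz inequality
a nonzero vector orthogonal to a timelike vector is spacelike. As `d ≥ 2`, some nonzero `u` is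
orthogonal to `θ₁'` and `θ₂'`, hence spacelike. Then `A = S_u S_{θ₁ - θ₁'}` maps `θ₁` to `θ₁'`, and
`S_u S_w` with `w = A θ₂ - θ₂'` maps `A θ₂` to `θ₂'` and fixes `θ₁'`, since equality of the Gram
matrices gives `[w, θ₁'] = 0`.
-/

open Matrix

section Minkowski

variable {d : ℕ}

lemma mink_comm (x y : Fin (d + 1) → ℝ) : mink x y = mink y x := by
  simp only [mink, mul_comm]

lemma mink_add_left (x y z : Fin (d + 1) → ℝ) : mink (x + y) z = mink x z + mink y z := by
  simp only [mink, Pi.add_apply, add_mul, Finset.sum_add_distrib]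
  ring

lemma mink_sub_left (x y z : Fin (d + 1) → ℝ) : mink (x - y) z = mink x z - mink y z := by
  simp only [mink, Pi.sub_apply, sub_mul, Finset.sum_sub_distrib]
  ring

lemma mink_smul_left (c : ℝ) (x y : Fin (d + 1) → ℝ) : mink (c • x) y = c * mink x y := by
  simp only [mink, Pi.smul_apply, smul_eq_mul, mul_assoc, ← Finset.mul_sum]
  ring

lemma mink_add_right (x y z : Fin (d + 1) → ℝ) : mink x (y + z) = mink x y + mink x z := by
  rw [mink_comm, mink_add_left, mink_comm y, mink_comm z]

lemma mink_sub_right (x y z : Fin (d + 1) → ℝ) : mink x (y - z) = mink x y - mink x z := by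
  rw [mink_comm, mink_sub_left, mink_comm y, mink_comm z]

lemma mink_smul_right (c : ℝ) (x y : Fin (d + 1) → ℝ) : mink x (c • y) = c * mink x y := by
  rw [mink_comm, mink_smul_left, mink_comm]

lemma mink_single_zero_right (x : Fin (d + 1) → ℝ) : mink x (Pi.single 0 1) = x 0 := by
  simp [mink]

lemma mink_self (x : Fin (d + 1) → ℝ) : mink x x = x 0 ^ 2 - ∑ i : Fin d, x i.succ ^ 2 := by
  simp only [mink, sq]

def minkDual (v : Fin (d + 1) → ℝ) : Fin (d + 1) → ℝ :=
  Fin.cons (v 0) (-Fin.tail v)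

lemma minkDual_dotProduct (v x : Fin (d + 1) → ℝ) : minkDual v ⬝ᵥ x = mink v x := by
  simp [minkDual, mink, dotProduct, Fin.sum_univ_succ, Fin.tail, sub_eq_add_neg]

def futureCone (d : ℕ) : Set (Fin (d + 1) → ℝ) :=
  {u | 0 < mink u u ∧ 0 < u 0}

lemma hypParam_subset_futureCone : hypParam d ⊆ futureCone d := by
  intro θ hθ
  have h0 : 0 < θ 0 := (Real.sqrt_nonneg _).trans_lt hθ
  refine ⟨?_, h0⟩
  rw [mink_self, sub_pos]
  exact (Real.sqrt_lt' h0).1 hθ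

lemma single_zero_mem_futureCone : (Pi.single 0 1 : Fin (d + 1) → ℝ) ∈ futureCone d := by
  simp [futureCone, mink_single_zero_right]

/-- Reverse Cauchy–Schwarz: for timelike `u`, `w` the Euclidean Cauchy–Schwarz inequality gives
`|∑ uᵢ wᵢ| < |u₀ w₀|`, so `[u,w]` has the sign of `u₀ w₀`. -/
lemma mink_pos_iff_of_timelike {u w : Fin (d + 1) → ℝ} (hu : 0 < mink u u) (hw : 0 < mink w w) :
    0 < mink u w ↔ 0 < u 0 * w 0 := by
  rw [mink_self] at hu hw
  have hcs :=
    Finset.sum_mul_sq_le_sq_mul_sq Finset.univ (fun i : Fin d => u i.succ) (fun i => w i.succ)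
  have hu' : 0 ≤ ∑ i : Fin d, u i.succ ^ 2 := by positivity
  have hw' : 0 ≤ ∑ i : Fin d, w i.succ ^ 2 := by positivity
  have hlt : (∑ i : Fin d, u i.succ * w i.succ) ^ 2 < (u 0 * w 0) ^ 2 := by
    rw [mul_pow]
    exact hcs.trans_lt (mul_lt_mul'' (by linarith) (by linarith) hu' hw')
  obtain ⟨hlo, hhi⟩ := abs_lt.1 (sq_lt_sq.1 hlt)
  rw [mink]
  constructor <;> intro h
  · by_contra! hq
    rw [abs_of_nonpos hq] at hlo
    linarith
  · rw [abs_of_pos h] at hhi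
    linarith

lemma mink_pos_of_mem_futureCone {u w : Fin (d + 1) → ℝ} (hu : u ∈ futureCone d)
    (hw : w ∈ futureCone d) : 0 < mink u w :=
  (mink_pos_iff_of_timelike hu.1 hw.1).2 (mul_pos hu.2 hw.2)

lemma add_mem_futureCone {u w : Fin (d + 1) → ℝ} (hu : u ∈ futureCone d)
    (hw : w ∈ futureCone d) : u + w ∈ futureCone d := by
  refine ⟨?_, add_pos hu.2 hw.2⟩
  rw [mink_add_left, mink_add_right, mink_add_right, mink_comm w u]
  linarith [hu.1, hw.1, mink_pos_of_mem_futureCone hu hw]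

lemma mink_self_neg_of_mink_eq_zero {t w : Fin (d + 1) → ℝ} (ht : 0 < mink t t)
    (htw : mink t w = 0) (hw : w ≠ 0) : mink w w < 0 := by
  rw [mink_self] at ht ⊢
  rw [mink] at htw
  by_contra! hww
  have hcs :=
    Finset.sum_mul_sq_le_sq_mul_sq Finset.univ (fun i : Fin d => t i.succ) (fun i => w i.succ)
  have ht' : 0 ≤ ∑ i : Fin d, t i.succ ^ 2 := by positivity
  have hw0 : w 0 = 0 := by
    rw [← sub_eq_zero.1 htw, mul_pow] at hcs
    have : (t 0 ^ 2 - ∑ i : Fin d, t i.succ ^ 2) * w 0 ^ 2 ≤ 0 := by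
      nlinarith [mul_le_mul_of_nonneg_left (sub_nonneg.1 hww) ht']
    exact pow_eq_zero_iff two_ne_zero |>.1 <|
      le_antisymm (nonpos_of_mul_nonpos_right this ht) (sq_nonneg _)
  have hws : ∑ i : Fin d, w i.succ ^ 2 = 0 := by
    rw [hw0] at hww
    linarith [show 0 ≤ ∑ i : Fin d, w i.succ ^ 2 by positivity]
  refine hw (funext fun i => Fin.cases hw0 (fun j => ?_) i)
  exact pow_eq_zero_iff two_ne_zero |>.1 <|
    (Finset.sum_eq_zero_iff_of_nonneg fun _ _ => sq_nonneg _).1 hws j (Finset.mem_univ j)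

end Minkowski

section Lorentz

variable {d : ℕ}

def IsLorentz (A : Matrix (Fin (d + 1)) (Fin (d + 1)) ℝ) : Prop :=
  ∀ x y, mink (A *ᵥ x) (A *ᵥ y) = mink x y

lemma IsLorentz.mul {A B : Matrix (Fin (d + 1)) (Fin (d + 1)) ℝ} (hA : IsLorentz A)
    (hB : IsLorentz B) : IsLorentz (A * B) := by
  intro x y
  rw [← mulVec_mulVec, ← mulVec_mulVec, hA, hB]

/-- `A 0 0` is the time component of `A e₀`, and `[A u, A e₀] = u₀ > 0` forces `A u` to point to
the future. -/
lemma IsLorentz.mulVec_mem_futureCone {A : Matrix (Fin (d + 1)) (Fin (d + 1)) ℝ}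
    (hA : IsLorentz A) (h00 : 0 < A 0 0) {u : Fin (d + 1) → ℝ} (hu : u ∈ futureCone d) :
    A *ᵥ u ∈ futureCone d := by
  have hAu : 0 < mink (A *ᵥ u) (A *ᵥ u) := by rw [hA]; exact hu.1
  have he : 0 < mink (A *ᵥ Pi.single 0 1) (A *ᵥ Pi.single 0 1) := by
    rw [hA]; exact single_zero_mem_futureCone.1
  have hpos : 0 < mink (A *ᵥ u) (A *ᵥ Pi.single 0 1) := by
    rw [hA, mink_single_zero_right]; exact hu.2
  rw [mink_pos_iff_of_timelike hAu he, mulVec_single_one, col_apply] at hpos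
  exact ⟨hAu, pos_of_mul_pos_left hpos h00.le⟩

lemma IsLorentz.mul_apply_zero_zero_pos {A B : Matrix (Fin (d + 1)) (Fin (d + 1)) ℝ}
    (hA : IsLorentz A) (hB : IsLorentz B) (hA00 : 0 < A 0 0) (hB00 : 0 < B 0 0) :
    0 < (A * B) 0 0 := by
  have := hA.mulVec_mem_futureCone hA00 (hB.mulVec_mem_futureCone hB00 single_zero_mem_futureCone)
  rw [mulVec_mulVec, mulVec_single_one] at this
  exact this.2

lemma mem_SOplus_of_isLorentz {A : Matrix (Fin (d + 1)) (Fin (d + 1)) ℝ} (hdet : A.det = 1)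
    (hA : IsLorentz A) (h00 : 0 < A 0 0) : A ∈ SOplus d := by
  refine ⟨hdet, hA, subset_antisymm ?_ fun y hy => ?_⟩
  · rintro _ ⟨x, hx, rfl⟩
    exact ⟨by rw [hA]; exact hx.1, (hA.mulVec_mem_futureCone h00 ⟨hx.1 ▸ one_pos, hx.2⟩).2⟩
  · have hAA : A * A⁻¹ = 1 := mul_nonsing_inv A (by rw [hdet]; exact isUnit_one)
    have hy' : A *ᵥ (A⁻¹ *ᵥ y) = y := by rw [mulVec_mulVec, hAA, one_mulVec]
    refine ⟨A⁻¹ *ᵥ y, ⟨?_, ?_⟩, hy'⟩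
    · rw [← hA, hy']; exact hy.1
    · rw [← mink_single_zero_right (A⁻¹ *ᵥ y), ← hA, hy']
      refine mink_pos_of_mem_futureCone ⟨hy.1 ▸ one_pos, hy.2⟩ ?_
      exact hA.mulVec_mem_futureCone h00 single_zero_mem_futureCone

lemma one_mem_SOplus : (1 : Matrix (Fin (d + 1)) (Fin (d + 1)) ℝ) ∈ SOplus d :=
  mem_SOplus_of_isLorentz det_one (fun x y => by simp only [one_mulVec]) (by simp)

lemma SOplus_mul {A B : Matrix (Fin (d + 1)) (Fin (d + 1)) ℝ} (hA : A ∈ SOplus d)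
    (hB : B ∈ SOplus d) : A * B ∈ SOplus d := by
  refine ⟨by rw [det_mul, hA.1, hB.1, one_mul], IsLorentz.mul hA.2.1 hB.2.1, ?_⟩
  rw [show (A * B).mulVec = A.mulVec ∘ B.mulVec from funext fun x => (mulVec_mulVec x A B).symm,
    Set.image_comp, hB.2.2, hA.2.2]

end Lorentz

section Reflection

variable {d : ℕ}

noncomputable def minkReflection (v : Fin (d + 1) → ℝ) : Matrix (Fin (d + 1)) (Fin (d + 1)) ℝ :=
  1 - (2 / mink v v) • vecMulVec v (minkDual v)

lemma minkReflection_mulVec (v x : Fin (d + 1) → ℝ) :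
    minkReflection v *ᵥ x = x - (2 * mink v x / mink v v) • v := by
  rw [minkReflection, sub_mulVec, one_mulVec, smul_mulVec, vecMulVec_mulVec, op_smul_eq_smul,
    minkDual_dotProduct, smul_smul]
  ring_nf

lemma minkReflection_isLorentz {v : Fin (d + 1) → ℝ} (hv : mink v v ≠ 0) :
    IsLorentz (minkReflection v) := by
  intro x y
  simp only [minkReflection_mulVec, mink_sub_left, mink_sub_right, mink_smul_left,
    mink_smul_right, mink_comm x v]
  field_simp
  ring

lemma det_minkReflection {v : Fin (d + 1) → ℝ} (hv : mink v v ≠ 0) :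
    (minkReflection v).det = -1 := by
  rw [minkReflection, sub_eq_add_neg, ← neg_smul, ← smul_vecMulVec, vecMulVec_eq Unit,
    det_one_add_replicateCol_mul_replicateRow, dotProduct_smul, minkDual_dotProduct, smul_eq_mul]
  field_simp
  ring

lemma minkReflection_apply_zero_zero_pos {v : Fin (d + 1) → ℝ} (hv : mink v v < 0) :
    0 < minkReflection v 0 0 := by
  have : 0 ≤ -(2 / mink v v) * (v 0 * v 0) :=
    mul_nonneg (neg_nonneg.2 (div_nonpos_of_nonneg_of_nonpos zero_le_two hv.le))
      (mul_self_nonneg _)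
  simp only [minkReflection, Matrix.sub_apply, one_apply_eq, Matrix.smul_apply, vecMulVec_apply,
    minkDual, Fin.cons_zero, smul_eq_mul]
  linarith

lemma minkReflection_mulVec_of_mink_eq_zero {v z : Fin (d + 1) → ℝ} (h : mink v z = 0) :
    minkReflection v *ᵥ z = z := by
  simp [minkReflection_mulVec, h]

lemma minkReflection_sub_mulVec {x y : Fin (d + 1) → ℝ} (hxy : mink x x = mink y y)
    (hv : mink (x - y) (x - y) ≠ 0) : minkReflection (x - y) *ᵥ x = y := by
  have h : mink (x - y) (x - y) = 2 * mink (x - y) x := by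
    simp only [mink_sub_left, mink_sub_right, mink_comm y x] at hv ⊢
    linarith
  rw [minkReflection_mulVec, h, div_self (h ▸ hv), one_smul, sub_sub_cancel]

lemma minkReflection_mul_mem_SOplus {u v : Fin (d + 1) → ℝ} (hu : mink u u < 0)
    (hv : mink v v < 0) : minkReflection u * minkReflection v ∈ SOplus d := by
  refine mem_SOplus_of_isLorentz ?_ ((minkReflection_isLorentz hu.ne).mul
    (minkReflection_isLorentz hv.ne)) ?_
  · rw [det_mul, det_minkReflection hu.ne, det_minkReflection hv.ne]
    norm_num
  · exact (minkReflection_isLorentz hu.ne).mul_apply_zero_zero_pos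
      (minkReflection_isLorentz hv.ne) (minkReflection_apply_zero_zero_pos hu)
      (minkReflection_apply_zero_zero_pos hv)

end Reflection

section Transitivity

variable {d : ℕ}

/-- The witness is `S_u S_{x-y}`: `x - y` is spacelike as it is orthogonal to the timelike `t`,
and the second reflection `S_u` restores determinant one without moving `y`. -/
lemma exists_SOplus_mulVec_eq {x y t u : Fin (d + 1) → ℝ} (hxy : mink x x = mink y y)
    (ht : 0 < mink t t) (hxyt : mink t (x - y) = 0) (hu : mink u u < 0) (huy : mink u y = 0) :
    ∃ A ∈ SOplus d, A *ᵥ x = y ∧ ∀ z, mink (x - y) z = 0 → mink u z = 0 → A *ᵥ z = z := by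
  by_cases hxy' : x = y
  · exact ⟨1, one_mem_SOplus, by rw [one_mulVec, hxy'], fun z _ _ => one_mulVec z⟩
  have hv : mink (x - y) (x - y) < 0 := mink_self_neg_of_mink_eq_zero ht hxyt (sub_ne_zero.2 hxy')
  refine ⟨_, minkReflection_mul_mem_SOplus hu hv, ?_, fun z hz hz' => ?_⟩
  · rw [← mulVec_mulVec, minkReflection_sub_mulVec hxy hv.ne,
      minkReflection_mulVec_of_mink_eq_zero huy]
  · rw [← mulVec_mulVec, minkReflection_mulVec_of_mink_eq_zero hz,
      minkReflection_mulVec_of_mink_eq_zero hz']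

lemma exists_ne_zero_mink_eq_zero (hd : 2 ≤ d) (a b : Fin (d + 1) → ℝ) :
    ∃ u ≠ 0, mink u a = 0 ∧ mink u b = 0 := by
  let f := mulVecLin (of ![minkDual a, minkDual b])
  have hf : LinearMap.ker f ≠ ⊥ := LinearMap.ker_ne_bot_of_finrank_lt (by simp; omega)
  obtain ⟨u, hu, hu0⟩ := (Submodule.ne_bot_iff _).1 hf
  have hu : f u = 0 := hu
  refine ⟨u, hu0, ?_, ?_⟩
  · simpa [f, mulVec, minkDual_dotProduct, mink_comm u] using congr_fun hu 0
  · simpa [f, mulVec, minkDual_dotProduct, mink_comm u] using congr_fun hu 1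

end Transitivity

theorem maximal_invariant_SOplus (d : ℕ) (hd : 2 ≤ d) :
    (∀ A ∈ SOplus d, ∀ θ θ' : Fin (d + 1) → ℝ, θ ∈ hypParam d → θ' ∈ hypParam d →
      mink (A.mulVec θ) (A.mulVec θ) = mink θ θ ∧
      mink (A.mulVec θ') (A.mulVec θ') = mink θ' θ' ∧
      mink (A.mulVec θ) (A.mulVec θ') = mink θ θ') ∧
    (∀ θ₁ θ₂ θ₁' θ₂' : Fin (d + 1) → ℝ,
      θ₁ ∈ hypParam d → θ₂ ∈ hypParam d → θ₁' ∈ hypParam d → θ₂' ∈ hypParam d →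
      mink θ₁ θ₁ = mink θ₁' θ₁' → mink θ₂ θ₂ = mink θ₂' θ₂' → mink θ₁ θ₂ = mink θ₁' θ₂' →
      ∃ A ∈ SOplus d, A.mulVec θ₁ = θ₁' ∧ A.mulVec θ₂ = θ₂') := by
  refine ⟨fun A hA θ θ' _ _ => ⟨hA.2.1 θ θ, hA.2.1 θ' θ', hA.2.1 θ θ'⟩, ?_⟩
  intro θ₁ θ₂ θ₁' θ₂' h₁ _ h₁' _ h₁₁ h₂₂ h₁₂
  have hθ₁ := hypParam_subset_futureCone h₁
  have hθ₁' := hypParam_subset_futureCone h₁'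
  obtain ⟨u, hu0, hu₁, hu₂⟩ := exists_ne_zero_mink_eq_zero hd θ₁' θ₂'
  have hu : mink u u < 0 :=
    mink_self_neg_of_mink_eq_zero hθ₁'.1 (by rw [mink_comm, hu₁]) hu0
  -- `θ₁ + θ₁'` is timelike and orthogonal to `θ₁ - θ₁'`, so `θ₁ - θ₁'` is spacelike.
  obtain ⟨A, hA, hAθ₁, -⟩ := exists_SOplus_mulVec_eq h₁₁ (add_mem_futureCone hθ₁ hθ₁').1
    (by rw [mink_sub_right, mink_add_left, mink_add_left, mink_comm θ₁' θ₁, h₁₁]; ring) hu hu₁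
  have hperp : mink (A *ᵥ θ₂ - θ₂') θ₁' = 0 := by
    have hAθ₂ : mink (A *ᵥ θ₂) θ₁' = mink θ₂ θ₁ := by rw [← hAθ₁, hA.2.1]
    rw [mink_sub_left, hAθ₂, mink_comm θ₂, h₁₂, mink_comm, sub_self]
  obtain ⟨B, hB, hBθ₂, hBfix⟩ := exists_SOplus_mulVec_eq (x := A *ᵥ θ₂) (by rw [hA.2.1, h₂₂])
    hθ₁'.1 (by rw [mink_comm, hperp]) hu hu₂
  refine ⟨B * A, SOplus_mul hB hA, ?_, ?_⟩
  · rw [← mulVec_mulVec, hAθ₁, hBfix θ₁' hperp hu₁]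
  · rw [← mulVec_mulVec, hBθ₂]
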